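/- arXiv:math/0512607 — 10 statements merged into one kernel-verified Lean document; each statement's English description precedes it below -/
import Mathlib

section
/- Let A and B be complex n×n matrices satisfying AB = ωBA, where ω is a primitive q-th root of unity. Then A^q + B^q = (A + B)^q. -/
/-!
If `a * b = ω • (b * a)`, expanding `(a + b) ^ m` and moving every `a` to the right gives the
`ω`-binomial theorem `(a + b) ^ m = ∑ [m, k] • b ^ k * a ^ (m - k)` with Gaussian binomial
coefficients `[m, k]`. These satisfy `[k + l, k] [k]! [l]! = [k + l]!` for the
`ω`-factorials `[i]!`. At a primitive `q`-th root of unity `[q]! = 0` while `[k]! ≠ 0` for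
`k < q`, so in a domain `[q, k] = 0` for `0 < k < q` and only the two extreme terms of
`(a + b) ^ q` survive.
-/

open Finset

section QBinomial

variable {R : Type*}

def qNat [Semiring R] (ω : R) (i : ℕ) : R := ∑ j ∈ range i, ω ^ j

def qFactorial [CommSemiring R] (ω : R) (m : ℕ) : R := ∏ i ∈ range m, qNat ω (i + 1)

/-- The Gaussian binomial coefficient `[m, k]` at `ω`. -/
def qChoose [Semiring R] (ω : R) : ℕ → ℕ → R
  | _, 0 => 1
  | 0, _ + 1 => 0
  | m + 1, k + 1 => qChoose ω m k + ω ^ (k + 1) * qChoose ω m (k + 1)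

variable [CommSemiring R] (ω : R)

@[simp]
lemma qChoose_zero_right (m : ℕ) : qChoose ω m 0 = 1 := by
  cases m <;> rfl

lemma qChoose_succ_succ (m k : ℕ) :
    qChoose ω (m + 1) (k + 1) = qChoose ω m k + ω ^ (k + 1) * qChoose ω m (k + 1) := rfl

lemma qChoose_eq_zero_of_lt {m k : ℕ} (h : m < k) : qChoose ω m k = 0 := by
  induction m generalizing k with
  | zero => obtain ⟨k, rfl⟩ := Nat.exists_eq_add_one_of_ne_zero h.ne'; rfl
  | succ m ih =>
    obtain ⟨k, rfl⟩ := Nat.exists_eq_add_one_of_ne_zero (Nat.ne_zero_of_lt h)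
    rw [qChoose_succ_succ, ih (by omega), ih (by omega), mul_zero, add_zero]

@[simp]
lemma qChoose_self (m : ℕ) : qChoose ω m m = 1 := by
  induction m with
  | zero => rfl
  | succ m ih => rw [qChoose_succ_succ, ih, qChoose_eq_zero_of_lt ω m.lt_succ_self]; ring

lemma qNat_add (a b : ℕ) : qNat ω (a + b) = qNat ω a + ω ^ a * qNat ω b := by
  simp only [qNat, sum_range_add, mul_sum, pow_add]

lemma qFactorial_succ (m : ℕ) : qFactorial ω (m + 1) = qFactorial ω m * qNat ω (m + 1) :=
  prod_range_succ _ m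

lemma qChoose_mul_qFactorial_mul_qFactorial (k l : ℕ) :
    qChoose ω (k + l) k * qFactorial ω k * qFactorial ω l = qFactorial ω (k + l) := by
  induction k generalizing l with
  | zero => simp [qFactorial]
  | succ k ihk =>
    induction l with
    | zero => simp [qFactorial]
    | succ l ihl =>
      have hk := ihk (l + 1)
      rw [show k + (l + 1) = k + 1 + l by omega] at hk
      calc qChoose ω (k + 1 + (l + 1)) (k + 1) * qFactorial ω (k + 1) * qFactorial ω (l + 1)
          = qNat ω (k + 1) * (qChoose ω (k + 1 + l) k * qFactorial ω k * qFactorial ω (l + 1))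
            + ω ^ (k + 1) * qNat ω (l + 1) *
              (qChoose ω (k + 1 + l) (k + 1) * qFactorial ω (k + 1) * qFactorial ω l) := by
            rw [show k + 1 + (l + 1) = k + 1 + l + 1 by omega, qChoose_succ_succ,
              qFactorial_succ ω k, qFactorial_succ ω l]
            ring
        _ = qNat ω (k + 1 + (l + 1)) * qFactorial ω (k + 1 + l) := by
            rw [hk, ihl, qNat_add ω (k + 1) (l + 1)]; ring
        _ = qFactorial ω (k + 1 + (l + 1)) := by
            rw [← add_assoc, qFactorial_succ, mul_comm]

end QBinomial


namespace IsPrimitiveRoot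

variable {R : Type*} [CommRing R] {ω : R} {q : ℕ}

lemma qNat_ne_zero (hω : IsPrimitiveRoot ω q) {i : ℕ} (hi0 : i ≠ 0) (hiq : i < q) :
    qNat ω i ≠ 0 := by
  intro h
  have hgeom := geom_sum_mul ω i
  rw [← qNat, h, zero_mul, eq_comm, sub_eq_zero] at hgeom
  exact hω.pow_ne_one_of_pos_of_lt hi0 hiq hgeom

variable [IsDomain R]

lemma qFactorial_ne_zero (hω : IsPrimitiveRoot ω q) {k : ℕ} (hk : k < q) :
    qFactorial ω k ≠ 0 :=
  prod_ne_zero_iff.mpr fun i hi ↦ hω.qNat_ne_zero i.succ_ne_zero (by grind)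

lemma qFactorial_self_eq_zero (hω : IsPrimitiveRoot ω q) (hq : 1 < q) : qFactorial ω q = 0 := by
  obtain ⟨m, rfl⟩ := Nat.exists_eq_add_one_of_ne_zero (by omega : q ≠ 0)
  rw [qFactorial_succ, qNat, hω.geom_sum_eq_zero hq, mul_zero]

lemma qChoose_eq_zero (hω : IsPrimitiveRoot ω q) {k : ℕ} (hk0 : k ≠ 0) (hkq : k < q) :
    qChoose ω q k = 0 := by
  have hfac := qChoose_mul_qFactorial_mul_qFactorial ω k (q - k)
  rw [Nat.add_sub_cancel' hkq.le, hω.qFactorial_self_eq_zero (by omega), mul_assoc] at hfac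
  exact (mul_eq_zero.mp hfac).resolve_right <|
    mul_ne_zero (hω.qFactorial_ne_zero hkq) (hω.qFactorial_ne_zero (by omega))

end IsPrimitiveRoot

section QCommuting

variable {R S : Type*} [CommSemiring R] [Semiring S] [Algebra R S] {ω : R} {a b : S}

lemma mul_pow_eq_smul_pow_mul (h : a * b = ω • (b * a)) (k : ℕ) :
    a * b ^ k = ω ^ k • (b ^ k * a) := by
  induction k with
  | zero => simp
  | succ k ih =>
    rw [pow_succ, ← mul_assoc, ih, smul_mul_assoc, mul_assoc, h, mul_smul_comm, smul_smul,
      ← pow_succ, ← mul_assoc, ← pow_succ]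

lemma add_pow_eq_sum_qChoose (h : a * b = ω • (b * a)) (m : ℕ) :
    (a + b) ^ m = ∑ p ∈ antidiagonal m, qChoose ω m p.1 • (b ^ p.1 * a ^ p.2) := by
  induction m with
  | zero => simp
  | succ m ih =>
    have hshift : ∑ p ∈ antidiagonal m, qChoose ω m p.1 • (a * (b ^ p.1 * a ^ p.2)) =
        a ^ (m + 1) + ∑ p ∈ antidiagonal m,
          (ω ^ (p.1 + 1) * qChoose ω m (p.1 + 1)) • (b ^ (p.1 + 1) * a ^ p.2) := by
      -- both sides are `∑ p ∈ antidiagonal (m + 1), (ω ^ p.1 * [m, p.1]) • b ^ p.1 * a ^ p.2`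
      calc _ = ∑ p ∈ antidiagonal m,
              (ω ^ p.1 * qChoose ω m p.1) • (b ^ p.1 * a ^ (p.2 + 1)) := by
            refine sum_congr rfl fun p _ ↦ ?_
            rw [← mul_assoc, mul_pow_eq_smul_pow_mul h, smul_mul_assoc, mul_assoc, ← pow_succ',
              smul_smul, mul_comm]
        _ = ∑ p ∈ antidiagonal (m + 1),
              (ω ^ p.1 * qChoose ω m p.1) • (b ^ p.1 * a ^ p.2) := by
            rw [Nat.sum_antidiagonal_succ', qChoose_eq_zero_of_lt ω m.lt_succ_self, mul_zero,
              zero_smul, zero_add]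
        _ = _ := by simp [Nat.sum_antidiagonal_succ]
    rw [pow_succ', ih, mul_sum, Nat.sum_antidiagonal_succ]
    simp only [mul_smul_comm, add_mul, smul_add, sum_add_distrib, hshift, ← mul_assoc b,
      ← pow_succ', qChoose_zero_right, pow_zero, one_mul, one_smul, qChoose_succ_succ, add_smul]
    abel

end QCommuting

theorem potter (n q : ℕ) (hq : 1 ≤ q) (ω : ℂ) (hω : IsPrimitiveRoot ω q)
    (A B : Matrix (Fin n) (Fin n) ℂ) (h : A * B = ω • (B * A)) :
    A ^ q + B ^ q = (A + B) ^ q := by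
  have hne : ((0, q) : ℕ × ℕ) ≠ (q, 0) := by simp only [ne_eq, Prod.mk.injEq]; omega
  rw [add_pow_eq_sum_qChoose h, sum_eq_add (0, q) (q, 0) hne]
  · simp
  · rintro ⟨k, l⟩ hkl ⟨hlow, hhigh⟩
    rw [HasAntidiagonal.mem_antidiagonal] at hkl
    rw [hω.qChoose_eq_zero (by grind) (by grind), zero_smul]
  · simp
  · simp
end

section
/- Let A and B be complex n×n matrices satisfying AB = ωBA with ω a primitive q-th root of unity. Then for all complex scalars s and t, (sA + tB)^q = (sA)^q + (tB)^q. -/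
open Finset

noncomputable def gb (ω : ℂ) : ℕ → ℕ → ℂ
  | 0, 0 => 1
  | 0, _+1 => 0
  | m+1, 0 => gb ω m 0
  | m+1, k+1 => gb ω m (k+1) + ω^(m-k) * gb ω m k

lemma gb_zero (ω : ℂ) (m : ℕ) : gb ω m 0 = 1 := by
  induction m with
  | zero => rfl
  | succ m ih => simpa [gb] using ih

lemma gb_of_lt (ω : ℂ) : ∀ m k, m < k → gb ω m k = 0
  | 0, _+1, _ => rfl
  | m+1, k+1, h => by
    rw [show gb ω (m+1) (k+1) = gb ω m (k+1) + ω^(m-k) * gb ω m k from rfl,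
      gb_of_lt ω m (k+1) (by omega), gb_of_lt ω m k (by omega)]
    ring

lemma gb_diag (ω : ℂ) (m : ℕ) : gb ω m m = 1 := by
  induction m with
  | zero => rfl
  | succ m ih =>
    rw [show gb ω (m+1) (m+1) = gb ω m (m+1) + ω^(m-m) * gb ω m m from rfl,
      gb_of_lt ω m (m+1) (by omega), ih]
    simp

lemma gb_rec2 (ω : ℂ) : ∀ m k, k ≤ m → gb ω (m+1) (k+1) = ω^(k+1) * gb ω m (k+1) + gb ω m k
  | 0, 0, _ => by
    rw [show gb ω 1 1 = gb ω 0 1 + ω^0 * gb ω 0 0 from rfl]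
    norm_num [show gb ω 0 1 = 0 from rfl, show gb ω 0 0 = 1 from rfl]
  | m+1, 0, _ => by
    have h1 := gb_rec2 ω m 0 (Nat.zero_le m)
    rw [show gb ω (m+2) 1 = gb ω (m+1) 1 + ω^(m+1-0) * gb ω (m+1) 0 from rfl,
      show gb ω (m+1) 1 = gb ω m 1 + ω^(m-0) * gb ω m 0 from rfl,
      show gb ω (m+1) 0 = gb ω m 0 from rfl]
    rw [show gb ω (m+1) 1 = gb ω m 1 + ω^(m-0) * gb ω m 0 from rfl] at h1
    simp only [Nat.sub_zero, pow_zero, pow_one, zero_add] at h1 ⊢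
    rw [pow_succ]
    linear_combination h1
  | m+1, j+1, hk => by
    rcases Nat.lt_or_ge j m with hj | hj
    · obtain ⟨d, hd⟩ : ∃ d, m = j + 1 + d := ⟨m - (j+1), by omega⟩
      subst hd
      have h1 := gb_rec2 ω (j+1+d) (j+1) (by omega)
      have h2 := gb_rec2 ω (j+1+d) j (by omega)
      rw [show gb ω (j+1+d+2) (j+2) = gb ω (j+1+d+1) (j+2) + ω^(j+1+d+1-(j+1)) * gb ω (j+1+d+1) (j+1) from rfl]
      rw [show gb ω (j+1+d+1) (j+2) = gb ω (j+1+d) (j+2) + ω^(j+1+d-(j+1)) * gb ω (j+1+d) (j+1) from rfl] at h1 ⊢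
      rw [show gb ω (j+1+d+1) (j+1) = gb ω (j+1+d) (j+1) + ω^(j+1+d-j) * gb ω (j+1+d) j from rfl] at h2 ⊢
      rw [show j+1+d+1-(j+1) = d+1 by omega]
      rw [show j+1+d-(j+1) = d by omega] at h1 ⊢
      rw [show j+1+d-j = d+1 by omega] at h2 ⊢
      linear_combination h1 + ω^(d+1) * h2
    · have hjm : j = m := by omega
      subst hjm
      rw [show gb ω (j+2) (j+2) = gb ω (j+1) (j+2) + ω^(j+1-(j+1)) * gb ω (j+1) (j+1) from rfl,
        gb_of_lt ω (j+1) (j+2) (by omega), gb_diag]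
      simp

lemma gb_vanish {q : ℕ} (ω : ℂ) (hω : IsPrimitiveRoot ω q) {k : ℕ} (h0 : 0 < k) (h1 : k < q) :
    gb ω q k = 0 := by
  obtain ⟨m, rfl⟩ : ∃ m, q = m + 1 := ⟨q - 1, by omega⟩
  obtain ⟨j, rfl⟩ : ∃ j, k = j + 1 := ⟨k - 1, by omega⟩
  have hjm : j < m := by omega
  have h2 := gb_rec2 ω m j (by omega)
  have h3 : gb ω (m+1) (j+1) = gb ω m (j+1) + ω^(m-j) * gb ω m j := rfl
  have hq1 : ω ^ (m+1) = 1 := hω.pow_eq_one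
  have hmul : ω^(m-j) * ω^(j+1) = ω^(m+1) := by
    rw [← pow_add]; congr 1; omega
  have hne : ω^(m-j) ≠ 1 := hω.pow_ne_one_of_pos_of_lt (by omega) (by omega)
  have key : (1 - ω^(m-j)) * gb ω (m+1) (j+1) = 0 := by
    linear_combination h3 - ω^(m-j) * h2 - gb ω m (j+1) * hmul - gb ω m (j+1) * hq1
  rcases mul_eq_zero.mp key with h | h
  · exact absurd (by linear_combination -h : ω^(m-j) = 1) hne
  · exact h

lemma comm_pow {n : ℕ} (ω : ℂ) (A B : Matrix (Fin n) (Fin n) ℂ)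
    (h : A * B = ω • (B * A)) (j : ℕ) : A^j * B = ω^j • (B * A^j) := by
  induction j with
  | zero => simp
  | succ j ih =>
    rw [pow_succ, mul_assoc, h, mul_smul_comm, ← mul_assoc, ih,
      smul_mul_assoc, pow_succ, mul_assoc, smul_smul]
    ring_nf

lemma expand {n : ℕ} (ω : ℂ) (A B : Matrix (Fin n) (Fin n) ℂ)
    (h : A * B = ω • (B * A)) (m : ℕ) :
    (A + B)^m = ∑ k ∈ range (m+1), gb ω m k • (B^k * A^(m-k)) := by
  induction m with
  | zero => simp [show gb ω 0 0 = 1 from rfl]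
  | succ m ih =>
    have key : ∀ k ∈ range (m+1),
        gb ω m k • (B^k * A^(m-k)) * (A + B)
        = gb ω m k • (B^k * A^(m+1-k)) + (gb ω m k * ω^(m-k)) • (B^(k+1) * A^(m-k)) := by
      intro k hk
      rw [mem_range] at hk
      rw [mul_add, smul_mul_assoc, smul_mul_assoc, mul_assoc, mul_assoc,
        comm_pow ω A B h (m-k), mul_smul_comm, smul_smul, ← pow_succ,
        show m-k+1 = m+1-k by omega, ← mul_assoc (B^k) B, ← pow_succ]
    rw [pow_succ, ih, Finset.sum_mul, Finset.sum_congr rfl key,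
      Finset.sum_add_distrib]
    rw [Finset.sum_range_succ' (fun k => gb ω (m+1) k • (B^k * A^(m+1-k))) (m+1)]
    rw [Finset.sum_range_succ' (fun k => gb ω m k • (B^k * A^(m+1-k))) m]
    rw [show gb ω (m+1) 0 = gb ω m 0 from rfl]
    have e1 : ∀ k, gb ω (m+1) (k+1) • (B^(k+1) * A^(m+1-(k+1)))
        = gb ω m (k+1) • (B^(k+1) * A^(m-k)) + (gb ω m k * ω^(m-k)) • (B^(k+1) * A^(m-k)) := by
      intro k
      rw [show m+1-(k+1) = m-k by omega,
        show gb ω (m+1) (k+1) = gb ω m (k+1) + ω^(m-k) * gb ω m k from rfl, add_smul,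
        mul_comm (ω^(m-k)) (gb ω m k)]
    simp only [e1]
    rw [Finset.sum_add_distrib]
    have e2 : ∑ k ∈ range m, gb ω m (k+1) • (B^(k+1) * A^(m+1-(k+1)))
        = ∑ k ∈ range (m+1), gb ω m (k+1) • (B^(k+1) * A^(m-k)) := by
      rw [Finset.sum_range_succ, gb_of_lt ω m (m+1) (by omega)]
      simp only [zero_smul, add_zero]
      refine Finset.sum_congr rfl fun k hk => ?_
      rw [show m+1-(k+1) = m-k by omega]
    rw [e2]
    abel

theorem potter_scaled (n q : ℕ) (hq : 1 ≤ q) (ω : ℂ) (hω : IsPrimitiveRoot ω q)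
    (A B : Matrix (Fin n) (Fin n) ℂ) (h : A * B = ω • (B * A)) (s t : ℂ) :
    (s • A + t • B) ^ q = (s • A) ^ q + (t • B) ^ q := by
  set A' := s • A with hA'
  set B' := t • B with hB'
  have h' : A' * B' = ω • (B' * A') := by
    rw [hA', hB', smul_mul_assoc, mul_smul_comm, smul_mul_assoc, mul_smul_comm, h,
      smul_smul, smul_smul, smul_smul, smul_smul]
    ring_nf
  rw [expand ω A' B' h' q]
  rw [Finset.sum_range_succ, gb_diag, Nat.sub_self, pow_zero, mul_one, one_smul]
  have key : ∑ k ∈ range q, gb ω q k • (B'^k * A'^(q-k)) = A'^q := by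
    rw [Finset.sum_eq_single_of_mem 0 (mem_range.mpr (by omega))]
    · simp [gb_zero]
    · intro k hk hk0
      rw [gb_vanish ω hω (by omega) (mem_range.mp hk)]
      simp
  rw [key]
end

section
/- Let ω be a primitive q-th root of unity, A the q×q cyclic shift matrix and B = diag(1, ω, ..., ω^{q-1}). Then for all complex s, t, the characteristic polynomial of sA + tB is λ^q - (s^q + t^q). -/
/-!
Only the diagonal and the graph of the rotation `j ↦ j + 1` carry nonzero entries of
`X - (s • A + t • B)`, and a permutation with `σ j ∈ {j, j + 1}` for every `j` is either the
identity or the rotation itself. So the Leibniz expansion has two terms: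
`∏ i, (X - ω ^ i t) = X ^ q - t ^ q` and `sign(rotation) • (-s) ^ q = -s ^ q`.
-/

open Finset Equiv Perm Matrix Polynomial

theorem Equiv.Perm.eq_one_or_eq_of_forall_apply_eq_or_eq {α : Type*} [Finite α] {σ τ : Perm α}
    (hτ : τ.IsCycle) (hfree : ∀ x, τ x ≠ x) (h : ∀ x, σ x = x ∨ σ x = τ x) : σ = 1 ∨ σ = τ := by
  refine or_iff_not_imp_left.2 fun hσ => ?_
  obtain ⟨x₀, hx₀⟩ : ∃ x, σ x ≠ x := not_forall.1 fun h₁ => hσ (Equiv.ext h₁)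
  have orbit : ∀ k : ℕ, σ ((τ ^ k) x₀) = τ ((τ ^ k) x₀) := by
    intro k
    induction k with
    | zero => exact (h x₀).resolve_left hx₀
    | succ k ih =>
      rw [pow_succ', Perm.mul_apply]
      -- a fixed point `τ y` of `σ` would give `σ (τ y) = σ y`, i.e. `τ y = y`
      refine (h _).resolve_left fun hfix => hfree ((τ ^ k) x₀) (σ.injective ?_)
      rw [hfix, ih]
  ext x
  obtain ⟨k, rfl⟩ := hτ.exists_pow_eq (hfree x₀) (hfree x)
  exact orbit k

theorem Matrix.det_eq_prod_diag_add_sign_smul_prod_of_isCycle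
    {α R : Type*} [Fintype α] [DecidableEq α] [CommRing R] {τ : Perm α} (hτ : τ.IsCycle)
    (hfree : ∀ x, τ x ≠ x) (M : Matrix α α R) (hM : ∀ i j, i ≠ j → i ≠ τ j → M i j = 0) :
    M.det = ∏ i, M i i + sign τ • ∏ i, M (τ i) i := by
  have hvanish : ∀ σ ∈ univ, σ ∉ ({1, τ} : Finset (Perm α)) → sign σ • ∏ i, M (σ i) i = 0 := by
    intro σ _ hσ
    simp only [mem_insert, mem_singleton, not_or] at hσ
    obtain ⟨j, hj⟩ : ∃ j, ¬(σ j = j ∨ σ j = τ j) := not_forall.1 fun h =>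
      (eq_one_or_eq_of_forall_apply_eq_or_eq hτ hfree h).elim hσ.1 hσ.2
    have hzero : M (σ j) j = 0 := hM _ _ (not_or.1 hj).1 (not_or.1 hj).2
    rw [prod_eq_zero (f := fun i => M (σ i) i) (mem_univ j) hzero, smul_zero]
  rw [det_apply, ← sum_subset (subset_univ _) hvanish, sum_pair hτ.ne_one.symm]
  simp

theorem Matrix.charpoly_diagonal_add_smul_cycle
    {α R : Type*} [Fintype α] [DecidableEq α] [CommRing R] {τ : Perm α} (hτ : τ.IsCycle)
    (hfree : ∀ x, τ x ≠ x) (d : α → R) (s : R) :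
    (diagonal d + s • of fun i j => if i = τ j then 1 else 0).charpoly =
      ∏ i, (X - C (d i)) + sign τ • (-C s) ^ Fintype.card α := by
  rw [charpoly, det_eq_prod_diag_add_sign_smul_prod_of_isCycle hτ hfree]
  · simp [hfree, Ne.symm (hfree _)]
  · intro i j hij hτij
    simp [hij, hτij]

theorem Equiv.Perm.sign_finRotate_smul_neg_pow {R : Type*} [CommRing R] (n : ℕ) (c : R) :
    sign (finRotate (n + 1)) • (-c) ^ (n + 1) = -c ^ (n + 1) := by
  rw [sign_finRotate, add_tsub_cancel_right, Units.smul_def, zsmul_eq_mul]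
  push_cast
  rw [neg_pow c, ← mul_assoc, ← pow_add, ← add_assoc, Odd.neg_one_pow ⟨n, by ring⟩]
  ring

theorem val_finRotate {q : ℕ} (j : Fin q) : (finRotate q j : ℕ) = (j + 1) % q := by
  cases q with
  | zero => exact j.elim0
  | succ q => simp [Fin.val_add]

open Polynomial in
theorem charpoly_wielandt (q : ℕ) (hq : 1 ≤ q) (ω : ℂ) (hω : IsPrimitiveRoot ω q)
    (A B : Matrix (Fin q) (Fin q) ℂ)
    (hA : A = Matrix.of fun i j : Fin q => if (i : ℕ) = ((j : ℕ) + 1) % q then 1 else 0)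
    (hB : B = Matrix.diagonal fun i : Fin q => ω ^ (i : ℕ)) (s t : ℂ) :
    (s • A + t • B).charpoly = X ^ q - C (s ^ q + t ^ q) := by
  subst hA hB
  have hshift : (of fun i j : Fin q => if (i : ℕ) = ((j : ℕ) + 1) % q then (1 : ℂ) else 0) =
      of fun i j => if i = finRotate q j then 1 else 0 := by
    ext i j
    simp only [of_apply, Fin.ext_iff, val_finRotate]
  rw [hshift]
  -- for `q = 1` the rotation is the identity and the two Leibniz terms coincide
  obtain rfl | hq2 := hq.eq_or_lt
  · rw [show (s • of fun i j : Fin 1 => if i = finRotate 1 j then (1 : ℂ) else 0) +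
        t • diagonal (fun i : Fin 1 => ω ^ (i : ℕ)) = diagonal fun _ => s + t by
      ext i j; simp [Subsingleton.elim i j]]
    simp [charpoly_diagonal]
  obtain ⟨n, rfl⟩ : ∃ n, q = n + 2 := ⟨q - 2, by omega⟩
  have hfree (i : Fin (n + 2)) : finRotate (n + 2) i ≠ i :=
    mem_support.1 (support_finRotate ▸ mem_univ i)
  have hB : t • diagonal (fun i : Fin (n + 2) => ω ^ (i : ℕ)) =
      diagonal fun i : Fin (n + 2) => ω ^ (i : ℕ) * t := by
    rw [← diagonal_smul]; congr 1; ext i; exact mul_comm _ _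
  rw [hB, add_comm (s • _), charpoly_diagonal_add_smul_cycle isCycle_finRotate hfree,
    Fintype.card_fin, sign_finRotate_smul_neg_pow,
    Fin.prod_univ_eq_prod_range (fun i => X - C (ω ^ i * t)),
    ← X_pow_sub_C_eq_prod hω (by omega) rfl, map_add, map_pow, map_pow]
  ring
end

section
/- Let A and B be complex n×n matrices with A*B = ω•(B*A) for a nonzero complex number ω, and suppose B is invertible. Then A is similar to ω•A; consequently, for every complex λ and every k, the number of Jordan blocks of A of size k for the eigenvalue λ equals the number of Jordan blocks of A of size k for the eigenvalue ωλ. In particular, rank((A - λI)^k) = rank((A - ωλI)^k) for all λ ∈ ℂ and k ∈ ℕ. -/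
theorem rank_jordan_symmetry (n : ℕ) (ω : ℂ) (hω : ω ≠ 0)
    (A B : Matrix (Fin n) (Fin n) ℂ) (hB : IsUnit B)
    (h : A * B = ω • (B * A)) (lam : ℂ) (k : ℕ) :
    ((A - lam • (1 : Matrix (Fin n) (Fin n) ℂ)) ^ k).rank
      = ((A - (ω * lam) • (1 : Matrix (Fin n) (Fin n) ℂ)) ^ k).rank := by
  have hdet : IsUnit B.det := (Matrix.isUnit_iff_isUnit_det B).mp hB
  have hBB : B * B⁻¹ = 1 := Matrix.mul_nonsing_inv B hdet
  have hA : A = ω • (B * A * B⁻¹) := by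
    calc A = A * B * B⁻¹ := by rw [Matrix.mul_assoc, hBB, Matrix.mul_one]
    _ = ω • (B * A) * B⁻¹ := by rw [h]
    _ = ω • (B * A * B⁻¹) := by rw [Matrix.smul_mul]
  have key : A - (ω * lam) • (1 : Matrix (Fin n) (Fin n) ℂ)
      = ω • (B * (A - lam • 1) * B⁻¹) := by
    rw [Matrix.mul_sub, Matrix.sub_mul, smul_sub]
    rw [Matrix.mul_smul, Matrix.smul_mul, Matrix.mul_one, hBB, smul_smul, ← hA]
  rw [key, smul_pow]
  have conjpow : (B * (A - lam • 1) * B⁻¹) ^ k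
      = B * (A - lam • 1) ^ k * B⁻¹ := by
    induction k with
    | zero => simp [hBB]
    | succ m ih =>
      rw [pow_succ, pow_succ, ih]
      calc B * (A - lam • 1) ^ m * B⁻¹ * (B * (A - lam • 1) * B⁻¹)
          = B * (A - lam • 1) ^ m * (B⁻¹ * B) * (A - lam • 1) * B⁻¹ := by
            simp only [Matrix.mul_assoc]
        _ = B * ((A - lam • 1) ^ m * (A - lam • 1)) * B⁻¹ := by
            rw [Matrix.nonsing_inv_mul B hdet]
            simp only [Matrix.mul_assoc, Matrix.mul_one]
  rw [conjpow]
  have hsmul : ω ^ k • (B * (A - lam • 1) ^ k * B⁻¹)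
      = (ω ^ k • (1 : Matrix (Fin n) (Fin n) ℂ)) * (B * (A - lam • 1) ^ k * B⁻¹) := by
    rw [Matrix.smul_mul, Matrix.one_mul]
  rw [hsmul]
  rw [Matrix.rank_mul_eq_right_of_isUnit_det _ _ (by
    rw [Matrix.det_smul, Matrix.det_one, mul_one]
    exact (pow_ne_zero _ (pow_ne_zero k hω)).isUnit)]
  rw [Matrix.rank_mul_eq_left_of_isUnit_det _ _ ((Matrix.isUnit_nonsing_inv_det_iff).mpr hdet)]
  rw [Matrix.rank_mul_eq_right_of_isUnit_det _ _ hdet]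
end

section
/- Let A and B be invertible complex n×n matrices with AB = αBA where α ≠ 1 is a nonzero complex number. Then α is a root of unity. -/
theorem alpha_root_of_unity (n : ℕ) (hn : 0 < n) (α : ℂ) (hα0 : α ≠ 0) (hα1 : α ≠ 1)
    (A B : Matrix (Fin n) (Fin n) ℂ) (hA : IsUnit A) (hB : IsUnit B)
    (h : A * B = α • (B * A)) : ∃ m : ℕ, 0 < m ∧ α ^ m = 1 := by
  refine ⟨n, hn, ?_⟩
  have hdet := congrArg Matrix.det h
  rw [Matrix.det_mul, Matrix.det_smul, Matrix.det_mul, Fintype.card_fin] at hdet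
  have hA' : A.det ≠ 0 := (Matrix.isUnit_iff_isUnit_det A).mp hA |>.ne_zero
  have hB' : B.det ≠ 0 := (Matrix.isUnit_iff_isUnit_det B).mp hB |>.ne_zero
  have : A.det * B.det ≠ 0 := mul_ne_zero hA' hB'
  have := mul_right_cancel₀ this (by linear_combination hdet : (1:ℂ) * (A.det * B.det) = α ^ n * (A.det * B.det))
  exact this.symm
end

section
/- Let A and B be complex n×n matrices satisfying AB = ωBA where ω is not a root of unity. Then AB is nilpotent. -/
/-!
The nonzero spectra of `A * B` and `B * A` coincide, and `A * B = ω • (B * A)` scales the latter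
by `ω`. So for `ω ≠ 0` the finite set of nonzero eigenvalues of `A * B` is stable under
multiplication by `ω`; an eigenvalue `μ ≠ 0` would give infinitely many eigenvalues
`ω ^ k * μ`. Hence `0` is the only eigenvalue of `A * B`, which over `ℂ` makes it nilpotent.
-/

open Polynomial

theorem Set.Finite.eq_empty_of_units_mul_mem {M₀ : Type*} [MonoidWithZero M₀]
    [IsRightCancelMulZero M₀] {ω : M₀ˣ} (hω : ¬IsOfFinOrder ω) {S : Set M₀}
    (hS : S.Finite) (h0 : 0 ∉ S) (hmul : ∀ x ∈ S, ↑ω * x ∈ S) : S = ∅ := by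
  refine Set.eq_empty_of_forall_notMem fun x hx ↦ ?_
  have horbit : ∀ k : ℕ, ↑(ω ^ k) * x ∈ S := by
    intro k
    induction k with
    | zero => simpa using hx
    | succ k ih => simpa [pow_succ', mul_assoc] using hmul _ ih
  have hinj : Function.Injective fun k : ℕ ↦ ↑(ω ^ k) * x :=
    (mul_left_injective₀ (ne_of_mem_of_not_mem hx h0)).comp
      (Units.val_injective.comp (injective_pow_iff_not_isOfFinOrder.mpr hω))
  exact Set.infinite_of_injective_forall_mem hinj horbit hS

theorem spectrum.units_mul_mem_of_mul_eq_smul_mul {R A : Type*} [Field R] [Ring A] [Algebra R A]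
    {a b : A} {ω : Rˣ} (h : a * b = ω • (b * a)) {x : R}
    (hx : x ∈ spectrum R (a * b) \ {0}) :
    ↑ω * x ∈ spectrum R (a * b) \ {0} := by
  rw [spectrum.nonzero_mul_comm] at hx
  refine ⟨?_, by simpa using hx.2⟩
  rw [h, spectrum.unit_smul_eq_smul]
  exact Set.smul_mem_smul_set hx.1

theorem Matrix.isNilpotent_of_spectrum_subset_singleton_zero {K n : Type*} [Field K]
    [IsAlgClosed K] [Fintype n] [DecidableEq n] {M : Matrix n n K}
    (h : spectrum K M ⊆ {0}) : IsNilpotent M := by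
  have hroots : M.charpoly.roots = Multiset.replicate (Multiset.card M.charpoly.roots) 0 :=
    Multiset.eq_replicate_card.mpr fun μ hμ ↦
      h (Matrix.mem_spectrum_iff_isRoot_charpoly.mpr (isRoot_of_mem_roots hμ))
  obtain ⟨k, hX⟩ : ∃ k, M.charpoly = X ^ k := by
    refine ⟨Multiset.card M.charpoly.roots, ?_⟩
    rw [(IsAlgClosed.splits M.charpoly).eq_prod_roots_of_monic M.charpoly_monic, hroots]
    simp
  exact ⟨k, by simpa [hX] using M.aeval_self_charpoly⟩

theorem AB_nilpotent (n : ℕ) (ω : ℂ) (hω : ∀ k : ℕ, 0 < k → ω ^ k ≠ 1)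
    (A B : Matrix (Fin n) (Fin n) ℂ) (h : A * B = ω • (B * A)) :
    IsNilpotent (A * B) := by
  obtain rfl | hω0 := eq_or_ne ω 0
  · exact ⟨1, by simpa using h⟩
  set u := Units.mk0 ω hω0
  have hu : ¬IsOfFinOrder u := by
    rw [isOfFinOrder_iff_pow_eq_one]
    rintro ⟨k, hk, hk1⟩
    exact hω k hk (by simpa [u] using congrArg Units.val hk1)
  have hS : spectrum ℂ (A * B) \ {0} = ∅ :=
    (Matrix.finite_spectrum _).sdiff.eq_empty_of_units_mul_mem hu (fun h0 ↦ h0.2 rfl)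
      fun x ↦ spectrum.units_mul_mem_of_mul_eq_smul_mul (ω := u) h
  exact Matrix.isNilpotent_of_spectrum_subset_singleton_zero (Set.sdiff_eq_empty.mp hS)
end

section
/- There exist 2×2 complex matrices A and B such that (A + B)^3 = A^3 + B^3 but AB ≠ ωBA for every complex number ω (in particular the pair is not quasi-commutative). For example A = [[1,1],[0,2]], B = [[-1,0],[7,-2]]. -/
theorem counterexample_converse_potter :
    ∃ A B : Matrix (Fin 2) (Fin 2) ℂ,
      A = !![1, 1; 0, 2] ∧ B = !![-1, 0; 7, -2] ∧
      (A + B) ^ 3 = A ^ 3 + B ^ 3 ∧ ∀ ω : ℂ, A * B ≠ ω • (B * A) := by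
  refine ⟨_, _, rfl, rfl, ?_, ?_⟩
  · show (!![1, 1; 0, 2] + !![-1, 0; 7, -2] : Matrix (Fin 2) (Fin 2) ℂ) ^ 3 = _
    simp [pow_succ, Matrix.add_mul, Matrix.mul_add]
    norm_num [Matrix.mul_fin_two, ← Matrix.ext_iff, Fin.forall_fin_two]
  · intro ω h
    have h1 := congrFun (congrFun h 0) 0
    have h2 := congrFun (congrFun h 0) 1
    simp [Matrix.mul_apply, Fin.sum_univ_two, Matrix.smul_apply] at h1 h2
    rw [← h2] at h1; norm_num at h1
end

section
/- There exist 2×2 complex upper/lower triangular matrices A = [[0,1],[0,2]] and B = [[-2,2],[0,0]] such that (A + B)^3 = A^3 + B^3, AB = 0, BA ≠ 0, and the pair is not quasi-commutative (AB ≠ ωBA for all ω ∈ ℂ). -/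
theorem counterexample_triangular :
    ∃ A B : Matrix (Fin 2) (Fin 2) ℂ,
      A = !![0, 1; 0, 2] ∧ B = !![-2, 2; 0, 0] ∧
      (A + B) ^ 3 = A ^ 3 + B ^ 3 ∧ A * B = 0 ∧ B * A ≠ 0 ∧
      ∀ ω : ℂ, ω ≠ 0 → A * B ≠ ω • (B * A) := by
  refine ⟨!![0, 1; 0, 2], !![-2, 2; 0, 0], rfl, rfl, ?_, ?_, ?_, ?_⟩
  · ext i j; fin_cases i <;> fin_cases j <;>
      simp [pow_succ, Matrix.mul_apply, Fin.sum_univ_succ] <;> ring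
  · ext i j; fin_cases i <;> fin_cases j <;>
      simp [Matrix.mul_apply, Fin.sum_univ_succ]
  · intro h
    have := congrFun (congrFun h 0) 1
    norm_num at this
  · intro ω hω h
    have := congrFun (congrFun h 0) 1
    simp [Matrix.mul_apply, Fin.sum_univ_succ] at this
    rcases this.symm with h1 | h1
    · norm_num at h1
    · exact hω h1
end

section
/- Let ω be a primitive 3rd root of unity, A = diag(1, ω, ω²), and B the strictly upper triangular 3×3 matrix with nonzero entries x₁, x₂, x₃ in positions (1,2), (1,3), (2,3). Then A³ = I, B³ = 0, and (A + tB)³ = I for every t ∈ ℂ, but AB is not a scalar multiple of BA. -/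
theorem counterexample_drazin_form (ω : ℂ) (hω : IsPrimitiveRoot ω 3)
    (x₁ x₂ x₃ : ℂ) (h₁ : x₁ ≠ 0) (h₂ : x₂ ≠ 0) (h₃ : x₃ ≠ 0)
    (A B : Matrix (Fin 3) (Fin 3) ℂ)
    (hA : A = !![1, 0, 0; 0, ω, 0; 0, 0, ω ^ 2])
    (hB : B = !![0, x₁, x₂; 0, 0, x₃; 0, 0, 0]) :
    A ^ 3 = 1 ∧ B ^ 3 = 0 ∧ (∀ t : ℂ, (A + t • B) ^ 3 = 1) ∧
      ∀ c : ℂ, A * B ≠ c • (B * A) := by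
  have hω3 : ω ^ 3 = 1 := hω.pow_eq_one
  have hωne : ω ≠ 1 := hω.ne_one (by norm_num)
  have hω0 : ω ≠ 0 := by
    intro h; rw [h] at hω3; norm_num at hω3
  have hsum : 1 + ω + ω ^ 2 = 0 := by
    have : (ω - 1) * (1 + ω + ω ^ 2) = 0 := by linear_combination hω3
    rcases mul_eq_zero.mp this with h | h
    · exact absurd (sub_eq_zero.mp h) hωne
    · exact h
  subst hA hB
  refine ⟨?_, ?_, ?_, ?_⟩
  · rw [pow_succ, pow_succ, pow_one, Matrix.mul_fin_three, Matrix.mul_fin_three,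
      Matrix.one_fin_three]
    ext i j
    fin_cases i <;> fin_cases j <;> simp <;>
      first
      | linear_combination hω3
      | linear_combination (ω ^ 3 + 1) * hω3
  · rw [pow_succ, pow_succ, pow_one, Matrix.mul_fin_three, Matrix.mul_fin_three]
    ext i j
    fin_cases i <;> fin_cases j <;> simp [Matrix.vecHead, Matrix.vecTail]
  · intro t
    have hadd : (!![1, 0, 0; 0, ω, 0; 0, 0, ω ^ 2] + t • !![0, x₁, x₂; 0, 0, x₃; 0, 0, 0])
        = !![1, t * x₁, t * x₂; 0, ω, t * x₃; 0, 0, ω ^ 2] := by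
      ext i j
      fin_cases i <;> fin_cases j <;> simp [Matrix.vecHead, Matrix.vecTail]
    rw [hadd, pow_succ, pow_succ, pow_one, Matrix.mul_fin_three, Matrix.mul_fin_three,
      Matrix.one_fin_three]
    ext i j
    fin_cases i <;> fin_cases j <;> simp <;> ring_nf <;>
      first
      | linear_combination hω3
      | linear_combination (ω ^ 3 + 1) * hω3
      | linear_combination t * x₁ * hsum
      | linear_combination ω ^ 2 * t * x₃ * hsum
      | linear_combination t * x₂ * hsum + t * x₂ * ω * hω3 + t ^ 2 * x₁ * x₃ * hsum
  · intro c h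
    rw [Matrix.mul_fin_three, Matrix.mul_fin_three] at h
    have e1 : 1 * x₁ + 0 * 0 + 0 * 0 = c * (0 * 0 + x₁ * ω + x₂ * 0) := by
      have := congrFun (congrFun h 0) 1
      simpa using this
    have e2 : 1 * x₂ + 0 * 0 + 0 * 0 = c * (0 * 0 + x₁ * 0 + x₂ * ω ^ 2) := by
      have := congrFun (congrFun h 0) 2
      simpa using this
    have hc1 : c * ω = 1 := by
      have hx : x₁ * (c * ω - 1) = 0 := by linear_combination -e1
      rcases mul_eq_zero.mp hx with h' | h'
      · exact absurd h' h₁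
      · exact sub_eq_zero.mp h'
    have hc2 : c * ω ^ 2 = 1 := by
      have hx : x₂ * (c * ω ^ 2 - 1) = 0 := by linear_combination -e2
      rcases mul_eq_zero.mp hx with h' | h'
      · exact absurd h' h₂
      · exact sub_eq_zero.mp h'
    have : ω = 1 := by
      have : c * ω * ω = c * ω ^ 2 := by ring
      rw [hc1, hc2] at this
      simpa using this
    exact hωne this
end

section
/- Fix a primitive q-th root of unity ω. Every noncommutative polynomial f(x,y) over ℂ in two noncommuting variables such that f(A,B) = 0 for all q×q complex matrices A, B satisfying AB = ωBA lies in the two-sided ideal of the free algebra ℂ⟨x,y⟩ generated by xy - ωyx. -/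
open FreeAlgebra

namespace QAide
noncomputable section

abbrev FA := FreeAlgebra ℂ (Fin 2)
def Xg : FA := ι ℂ (0 : Fin 2)
def Yg : FA := ι ℂ (1 : Fin 2)
def Ig (ω : ℂ) : TwoSidedIdeal FA := TwoSidedIdeal.span {Xg * Yg - ω • (Yg * Xg)}

variable {ω : ℂ} {n : ℕ}

lemma smul_mem_Ig (c : ℂ) {a : FA} (h : a ∈ Ig ω) : c • a ∈ Ig ω := by
  rw [Algebra.smul_def]; exact (Ig ω).mul_mem_left _ _ h

lemma gen_mem_Ig : Xg * Yg - ω • (Yg * Xg) ∈ Ig ω := TwoSidedIdeal.subset_span rfl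

lemma yx_mem_Ig (hω0 : ω ≠ 0) : Yg * Xg - ω⁻¹ • (Xg * Yg) ∈ Ig ω := by
  have h := smul_mem_Ig (ω := ω) (-ω⁻¹) gen_mem_Ig
  have heq : (-ω⁻¹) • (Xg * Yg - ω • (Yg * Xg)) = Yg * Xg - ω⁻¹ • (Xg * Yg) := by
    rw [smul_sub, smul_smul, neg_mul, inv_mul_cancel₀ hω0, neg_smul, neg_smul, one_smul,
      sub_neg_eq_add, neg_add_eq_sub]
  rwa [heq] at h

lemma key_Ig (hω0 : ω ≠ 0) (i : ℕ) : Yg * Xg ^ i - (ω⁻¹) ^ i • (Xg ^ i * Yg) ∈ Ig ω := by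
  induction i with
  | zero => simpa using (Ig ω).zero_mem
  | succ i ih =>
    have h1 := (Ig ω).mul_mem_right _ Xg ih
    have h2 := smul_mem_Ig ((ω⁻¹) ^ i) ((Ig ω).mul_mem_left (Xg ^ i) _ (yx_mem_Ig hω0))
    have h3 := (Ig ω).add_mem h1 h2
    have heq : (Yg * Xg ^ i - ω⁻¹ ^ i • (Xg ^ i * Yg)) * Xg
        + ω⁻¹ ^ i • (Xg ^ i * (Yg * Xg - ω⁻¹ • (Xg * Yg)))
        = Yg * Xg ^ (i+1) - ω⁻¹ ^ (i+1) • (Xg ^ (i+1) * Yg) := by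
      simp only [sub_mul, mul_sub, smul_sub, smul_mul_assoc, mul_smul_comm, smul_smul,
        mul_assoc, pow_succ]
      abel
    rwa [heq] at h3

def mons : Set FA := Set.range (fun p : ℕ × ℕ => Xg ^ p.1 * Yg ^ p.2)

def Mspan (ω : ℂ) : Submodule ℂ FA := Submodule.span ℂ ((Ig ω : Set FA) ∪ mons)

lemma I_subset_M {a : FA} (h : a ∈ Ig ω) : a ∈ Mspan ω := Submodule.subset_span (Or.inl h)

lemma mons_subset_M (i j : ℕ) : Xg ^ i * Yg ^ j ∈ Mspan ω :=
  Submodule.subset_span (Or.inr ⟨(i, j), rfl⟩)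

lemma mulX_M : ∀ m ∈ Mspan ω, Xg * m ∈ Mspan ω := by
  intro m hm
  induction hm using Submodule.span_induction with
  | mem x h =>
    rcases h with h | ⟨⟨i, j⟩, rfl⟩
    · exact I_subset_M ((Ig ω).mul_mem_left _ _ h)
    · have : Xg * (Xg ^ i * Yg ^ j) = Xg ^ (i+1) * Yg ^ j := by rw [pow_succ', mul_assoc]
      rw [this]; exact mons_subset_M _ _
  | zero => simp
  | add x y _ _ hx hy => rw [mul_add]; exact add_mem hx hy
  | smul c x _ hx => rw [mul_smul_comm]; exact Submodule.smul_mem _ _ hx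

lemma mulY_M (hω0 : ω ≠ 0) : ∀ m ∈ Mspan ω, Yg * m ∈ Mspan ω := by
  intro m hm
  induction hm using Submodule.span_induction with
  | mem x h =>
    rcases h with h | ⟨⟨i, j⟩, rfl⟩
    · exact I_subset_M ((Ig ω).mul_mem_left _ _ h)
    · have heq : Yg * (Xg ^ i * Yg ^ j)
          = (Yg * Xg ^ i - ω⁻¹ ^ i • (Xg ^ i * Yg)) * Yg ^ j
            + ω⁻¹ ^ i • (Xg ^ i * Yg ^ (j+1)) := by
        simp only [sub_mul, smul_mul_assoc, mul_assoc, pow_succ']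
        abel
      rw [heq]
      exact add_mem (I_subset_M ((Ig ω).mul_mem_right _ _ (key_Ig hω0 i)))
        (Submodule.smul_mem _ _ (mons_subset_M _ _))
  | zero => simp
  | add x y _ _ hx hy => rw [mul_add]; exact add_mem hx hy
  | smul c x _ hx => rw [mul_smul_comm]; exact Submodule.smul_mem _ _ hx

lemma all_mem_M (hω0 : ω ≠ 0) (f : FA) : f ∈ Mspan ω := by
  have h : ∀ f : FA, ∀ m ∈ Mspan ω, f * m ∈ Mspan ω := by
    intro f
    induction f using FreeAlgebra.induction with
    | grade0 r =>
      intro m hm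
      rw [← Algebra.smul_def]; exact Submodule.smul_mem _ _ hm
    | grade1 x =>
      fin_cases x
      · exact mulX_M
      · exact mulY_M hω0
    | mul a b ha hb => intro m hm; rw [mul_assoc]; exact ha _ (hb _ hm)
    | add a b ha hb => intro m hm; rw [add_mul]; exact add_mem (ha _ hm) (hb _ hm)
  simpa using h f (Xg ^ 0 * Yg ^ 0) (mons_subset_M 0 0)

lemma exists_normal (hω0 : ω ≠ 0) (f : FA) :
    ∃ c : (ℕ × ℕ) →₀ ℂ, f - (c.sum fun p a => a • (Xg ^ p.1 * Yg ^ p.2)) ∈ Ig ω := by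
  have hf := all_mem_M hω0 f
  rw [Mspan, Submodule.span_union, Submodule.mem_sup] at hf
  obtain ⟨u, hu, g, hg, rfl⟩ := hf
  have hu' : u ∈ Ig ω :=
    Submodule.span_induction (p := fun x _ => x ∈ Ig ω) (fun x h => h) (Ig ω).zero_mem
      (fun x y _ _ hx hy => (Ig ω).add_mem hx hy) (fun c x _ hx => smul_mem_Ig c hx) hu
  rw [mons] at hg
  obtain ⟨c, hc⟩ := Finsupp.mem_span_range_iff_exists_finsupp.mp hg
  exact ⟨c, by rw [hc]; simpa using hu'⟩

/-! ### The clock and shift matrices -/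

lemma pow_mod_eq {m : ℕ} (h : ω ^ m = 1) (a : ℕ) : ω ^ (a % m) = ω ^ a := by
  conv_rhs => rw [← Nat.div_add_mod a m]
  rw [pow_add, pow_mul, h, one_pow, one_mul]

def Pm (n : ℕ) (ω : ℂ) : Matrix (Fin (n+1)) (Fin (n+1)) ℂ :=
  Matrix.diagonal fun i => ω ^ (i : ℕ)

def Qm (n : ℕ) : Matrix (Fin (n+1)) (Fin (n+1)) ℂ :=
  Matrix.of fun i j => if i = j + 1 then 1 else 0

def Qm' (n : ℕ) : Matrix (Fin (n+1)) (Fin (n+1)) ℂ :=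
  Matrix.of fun i j => if i + 1 = j then 1 else 0

lemma PQ_rel (hω1 : ω ^ (n+1) = 1) : Pm n ω * Qm n = ω • (Qm n * Pm n ω) := by
  ext i j
  rw [Matrix.smul_apply, Pm, Matrix.diagonal_mul, Matrix.mul_diagonal]
  show ω ^ (i:ℕ) * (if i = j + 1 then (1:ℂ) else 0)
      = ω * ((if i = j + 1 then (1:ℂ) else 0) * ω ^ (j:ℕ))
  by_cases h : i = j + 1
  · subst h
    simp only [if_pos rfl, mul_one, one_mul]
    rw [Fin.val_add, pow_mod_eq hω1, pow_add, Fin.val_one', pow_mod_eq hω1, pow_one]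
    ring
  · simp [h]

lemma QQ' : Qm n * Qm' n = 1 := by
  ext i k
  rw [Matrix.mul_apply, Matrix.one_apply]
  simp only [Qm, Qm', Matrix.of_apply]
  have key : ∀ j : Fin (n+1),
      ((if i = j + 1 then (1:ℂ) else 0) * (if j + 1 = k then 1 else 0))
        = if j = i - 1 then (if i = k then (1:ℂ) else 0) else 0 := by
    intro j
    by_cases h : j = i - 1
    · subst h
      rw [sub_add_cancel]
      simp
    · have h2 : i ≠ j + 1 := fun hc => h (by rw [hc, add_sub_cancel_right])
      simp [h2, h]
  rw [Finset.sum_congr rfl (fun j _ => key j), Finset.sum_ite_eq']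
  simp

lemma Q'Q : Qm' n * Qm n = 1 := by
  ext i k
  rw [Matrix.mul_apply, Matrix.one_apply]
  simp only [Qm, Qm', Matrix.of_apply]
  have key : ∀ j : Fin (n+1),
      ((if i + 1 = j then (1:ℂ) else 0) * (if j = k + 1 then 1 else 0))
        = if j = i + 1 then (if i = k then (1:ℂ) else 0) else 0 := by
    intro j
    by_cases h : j = i + 1
    · subst h
      by_cases h2 : i = k
      · subst h2; simp
      · have h3 : i + 1 ≠ k + 1 := fun hc => h2 (by exact add_right_cancel hc)
        simp [h2, h3]
    · have h2 : i + 1 ≠ j := fun hc => h hc.symm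
      simp [h2, h]
  rw [Finset.sum_congr rfl (fun j _ => key j), Finset.sum_ite_eq']
  simp

lemma isUnit_Pm (hω0 : ω ≠ 0) : IsUnit (Pm n ω) := by
  rw [Matrix.isUnit_iff_isUnit_det, Pm, Matrix.det_diagonal]
  exact isUnit_iff_ne_zero.mpr (Finset.prod_ne_zero_iff.mpr fun i _ => pow_ne_zero _ hω0)

lemma isUnit_Qm : IsUnit (Qm n) := ⟨⟨Qm n, Qm' n, QQ', Q'Q⟩, rfl⟩

lemma E_ne (hω0 : ω ≠ 0) (i j : ℕ) : Pm n ω ^ i * Qm n ^ j ≠ 0 :=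
  (((isUnit_Pm hω0).pow i).mul (isUnit_Qm.pow j)).ne_zero

/-! ### Coefficient extraction -/

lemma msingle_inj {q q' : ℕ × ℕ}
    (h : (Finsupp.single (0 : Fin 2) q.1 + Finsupp.single 1 q.2)
       = Finsupp.single (0 : Fin 2) q'.1 + Finsupp.single 1 q'.2) : q = q' := by
  have h0 := DFunLike.congr_fun h 0
  have h1 := DFunLike.congr_fun h 1
  simp [Finsupp.single_apply] at h0 h1
  exact Prod.ext h0 h1

lemma eval_normal (hω1 : ω ^ (n+1) = 1) (c : (ℕ × ℕ) →₀ ℂ)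
    (h : ∀ a b : ℂ,
      (c.sum fun p r => (r * (a ^ p.1 * b ^ p.2)) • (Pm n ω ^ p.1 * Qm n ^ p.2)) = 0) :
    c = 0 := by
  have hω0 : ω ≠ 0 := fun h0 => by simp [h0] at hω1
  ext q0
  rw [Finsupp.coe_zero, Pi.zero_apply]
  by_contra hne
  have hmem : q0 ∈ c.support := Finsupp.mem_support_iff.mpr hne
  have hEntry : ∀ r0 s0 : Fin (n+1),
      c q0 * (Pm n ω ^ q0.1 * Qm n ^ q0.2) r0 s0 = 0 := by
    intro r0 s0
    set p : MvPolynomial (Fin 2) ℂ := c.sum fun q r =>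
      MvPolynomial.monomial (Finsupp.single 0 q.1 + Finsupp.single 1 q.2)
        (r * ((Pm n ω ^ q.1 * Qm n ^ q.2) r0 s0)) with hp
    have heval : ∀ v : Fin 2 → ℂ, MvPolynomial.eval v p = 0 := by
      intro v
      have h2 : (c.sum fun q r =>
          (r * (v 0 ^ q.1 * v 1 ^ q.2)) • (Pm n ω ^ q.1 * Qm n ^ q.2)) r0 s0
          = (0 : Matrix (Fin (n+1)) (Fin (n+1)) ℂ) r0 s0 := by rw [h (v 0) (v 1)]
      rw [Matrix.zero_apply, Finsupp.sum, Matrix.sum_apply] at h2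
      simp only [Matrix.smul_apply, smul_eq_mul] at h2
      rw [hp, Finsupp.sum, map_sum, ← h2]
      refine Finset.sum_congr rfl fun q _ => ?_
      rw [MvPolynomial.eval_monomial]
      rw [Finsupp.prod_add_index (fun a _ => pow_zero _) (fun a _ b1 b2 => pow_add _ _ _)]
      rw [Finsupp.prod_single_index (h := fun i k => v i ^ k) (pow_zero _),
        Finsupp.prod_single_index (h := fun i k => v i ^ k) (pow_zero _)]
      ring
    have hp0 : p = 0 := MvPolynomial.funext fun v => by rw [heval v, map_zero]
    have hc0 := congrArg
      (MvPolynomial.coeff (Finsupp.single (0 : Fin 2) q0.1 + Finsupp.single 1 q0.2)) hp0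
    rw [hp, Finsupp.sum, MvPolynomial.coeff_zero, MvPolynomial.coeff_sum] at hc0
    have hterm : ∀ q ∈ c.support,
        MvPolynomial.coeff (Finsupp.single (0 : Fin 2) q0.1 + Finsupp.single 1 q0.2)
          (MvPolynomial.monomial (Finsupp.single 0 q.1 + Finsupp.single 1 q.2)
            (c q * ((Pm n ω ^ q.1 * Qm n ^ q.2) r0 s0)))
        = if q = q0 then c q * ((Pm n ω ^ q.1 * Qm n ^ q.2) r0 s0) else 0 := by
      intro q _
      rw [MvPolynomial.coeff_monomial]
      congr 1
      exact propext ⟨fun hc => msingle_inj hc, fun hq' => by rw [hq']⟩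
    rw [Finset.sum_congr rfl hterm, Finset.sum_ite_eq', if_pos hmem] at hc0
    exact hc0
  have hE : (Pm n ω ^ q0.1 * Qm n ^ q0.2) = 0 := by
    ext r0 s0
    have := hEntry r0 s0
    rw [Matrix.zero_apply]
    exact (mul_eq_zero.mp this).resolve_left hne
  exact E_ne hω0 q0.1 q0.2 hE

/-! ### Glue -/

lemma lift_vanish {A B : Matrix (Fin (n+1)) (Fin (n+1)) ℂ} (hAB : A * B = ω • (B * A))
    {h : FA} (hh : h ∈ Ig ω) : FreeAlgebra.lift ℂ ![A, B] h = 0 := by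
  rw [← TwoSidedIdeal.mem_ker]
  refine TwoSidedIdeal.mem_span_iff.mp hh _ ?_
  intro x hx
  rw [Set.mem_singleton_iff] at hx
  subst hx
  rw [SetLike.mem_coe, TwoSidedIdeal.mem_ker]
  simp only [map_sub, map_smul, map_mul, Xg, Yg, lift_ι_apply, Matrix.cons_val_zero,
    Matrix.cons_val_one, Matrix.head_cons]
  rw [hAB, sub_self]

lemma lift_normal (a b : ℂ) (c : (ℕ × ℕ) →₀ ℂ) :
    FreeAlgebra.lift ℂ ![a • Pm n ω, b • Qm n] (c.sum fun p r => r • (Xg ^ p.1 * Yg ^ p.2))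
      = c.sum fun p r => (r * (a ^ p.1 * b ^ p.2)) • (Pm n ω ^ p.1 * Qm n ^ p.2) := by
  rw [map_finsuppSum]
  refine Finsupp.sum_congr fun p _ => ?_
  rw [map_smul, map_mul, map_pow, map_pow, Xg, Yg, lift_ι_apply, lift_ι_apply]
  simp only [Matrix.cons_val_zero, Matrix.cons_val_one, Matrix.head_cons]
  rw [smul_pow, smul_pow, Matrix.smul_mul, Matrix.mul_smul, smul_smul, smul_smul]
  congr 1
  ring

end
end QAide

open FreeAlgebra in
theorem identities_from_ideal (q : ℕ) (hq : 1 ≤ q) (ω : ℂ) (hω : IsPrimitiveRoot ω q)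
    (f : FreeAlgebra ℂ (Fin 2))
    (hf : ∀ A B : Matrix (Fin q) (Fin q) ℂ, A * B = ω • (B * A) →
      FreeAlgebra.lift ℂ ![A, B] f = 0) :
    f ∈ TwoSidedIdeal.span {ι ℂ (0 : Fin 2) * ι ℂ (1 : Fin 2)
      - ω • (ι ℂ (1 : Fin 2) * ι ℂ (0 : Fin 2))} := by
  obtain ⟨n, rfl⟩ : ∃ n, q = n + 1 := ⟨q - 1, (Nat.succ_pred_eq_of_pos hq).symm⟩
  have hω1 : ω ^ (n+1) = 1 := hω.pow_eq_one
  have hω0 : ω ≠ 0 := fun h0 => by simp [h0] at hω1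
  show f ∈ QAide.Ig ω
  obtain ⟨c, hc⟩ := QAide.exists_normal hω0 f
  have hrel : ∀ a b : ℂ, (a • QAide.Pm n ω) * (b • QAide.Qm n)
      = ω • ((b • QAide.Qm n) * (a • QAide.Pm n ω)) := by
    intro a b
    simp only [Matrix.smul_mul, Matrix.mul_smul, smul_smul]
    rw [QAide.PQ_rel hω1, smul_smul]
    congr 1
    ring
  have hzero : ∀ a b : ℂ, (c.sum fun p r =>
      (r * (a ^ p.1 * b ^ p.2)) • (QAide.Pm n ω ^ p.1 * QAide.Qm n ^ p.2)) = 0 := by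
    intro a b
    rw [← QAide.lift_normal a b c]
    have h1 := hf _ _ (hrel a b)
    have h2 := QAide.lift_vanish (hrel a b) hc
    rw [map_sub, h1, zero_sub, neg_eq_zero] at h2
    exact h2
  have hc0 : c = 0 := QAide.eval_normal hω1 c hzero
  rw [hc0] at hc
  simpa using hc
end
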